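/- Define 𝓛(λ) = λ²(s²/4)κ² + λΦ_s + γγᵀ and 𝓐(λ) = −(s/2)κ − (1/λ)γγᵀ, where Φ_s = γ∧p + (s/2)(κγγᵀ + γγᵀκ). Along solutions of γ' = p, p' = sκp + μγ with μ = s⟨p,κγ⟩ − ⟨p,p⟩, ⟨γ,γ⟩ = 1, ⟨p,γ⟩ = 0, the Lax equation 𝓛(λ)' = [𝓛(λ), 𝓐(λ)] holds for all λ ≠ 0. -/

import Mathlib

/-- The magnetic momentum map `Φ_s = γ∧p + (s/2)(κγγᵀ + γγᵀκ)`. -/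
noncomputable def magMomentum {n : ℕ} (s : ℝ) (κ : Matrix (Fin n) (Fin n) ℝ)
    (γ p : Fin n → ℝ) : Matrix (Fin n) (Fin n) ℝ :=
  Matrix.vecMulVec γ p - Matrix.vecMulVec p γ
    + (s / 2) • (κ * Matrix.vecMulVec γ γ + Matrix.vecMulVec γ γ * κ)

/-- The real Lax matrix `𝓛(λ) = λ²(s²/4)κ² + λΦ_s + γγᵀ`. -/
noncomputable def laxLReal {n : ℕ} (s lam : ℝ) (κ : Matrix (Fin n) (Fin n) ℝ)
    (γ p : Fin n → ℝ) : Matrix (Fin n) (Fin n) ℝ :=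
  (lam ^ 2 * s ^ 2 / 4) • κ ^ 2 + lam • magMomentum s κ γ p + Matrix.vecMulVec γ γ

/-- The matrix `𝓐(λ) = −(s/2)κ − (1/λ)γγᵀ`. -/
noncomputable def laxAReal {n : ℕ} (s lam : ℝ) (κ : Matrix (Fin n) (Fin n) ℝ)
    (γ : Fin n → ℝ) : Matrix (Fin n) (Fin n) ℝ :=
  (-(s / 2)) • κ - (1 / lam) • Matrix.vecMulVec γ γ

section MagneticLaxAux
open Matrix
variable {n : ℕ}

lemma vmv_mul (M : Matrix (Fin n) (Fin n) ℝ) (a b : Fin n → ℝ) :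
    vecMulVec a b * M = vecMulVec a (M.vecMul b) := by
  ext i j
  simp [mul_apply, vecMulVec_apply, vecMul, dotProduct, Finset.mul_sum, mul_assoc]

lemma mul_vmv (M : Matrix (Fin n) (Fin n) ℝ) (a b : Fin n → ℝ) :
    M * vecMulVec a b = vecMulVec (M.mulVec a) b := by
  ext i j
  simp [mul_apply, vecMulVec_apply, mulVec, dotProduct, Finset.sum_mul, mul_assoc]

lemma vmv_vmv (a b c d : Fin n → ℝ) :
    vecMulVec a b * vecMulVec c d = (∑ k, b k * c k) • vecMulVec a d := by
  ext i j
  simp [mul_apply, vecMulVec_apply, Finset.sum_mul, Finset.mul_sum]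
  exact Finset.sum_congr rfl (by intros; ring)

lemma vmv_mulVec (a b v : Fin n → ℝ) :
    vecMulVec a b *ᵥ v = (∑ k, b k * v k) • a := by
  ext i
  simp [vecMulVec_apply, mulVec, dotProduct, Finset.sum_mul, Finset.mul_sum]
  exact Finset.sum_congr rfl (by intros; ring)

lemma vecMul_vmv (a b v : Fin n → ℝ) :
    v ᵥ* vecMulVec a b = (∑ k, v k * a k) • b := by
  ext i
  simp [vecMulVec_apply, vecMul, dotProduct, Finset.sum_mul, Finset.mul_sum]
  exact Finset.sum_congr rfl (by intros; ring)

lemma vmv_smul_left (r : ℝ) (a b : Fin n → ℝ) :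
    vecMulVec (r • a) b = r • vecMulVec a b := by
  ext i j; simp [vecMulVec_apply]; ring

lemma vmv_smul_right (r : ℝ) (a b : Fin n → ℝ) :
    vecMulVec a (r • b) = r • vecMulVec a b := by
  ext i j; simp [vecMulVec_apply]; ring

lemma vecMul_smulM (r : ℝ) (M : Matrix (Fin n) (Fin n) ℝ) (v : Fin n → ℝ) :
    v ᵥ* (r • M) = r • (v ᵥ* M) := by
  ext i; simp [vecMul, dotProduct, Finset.mul_sum]; exact Finset.sum_congr rfl (by intros; ring)

lemma vmv_neg_right (a b : Fin n → ℝ) : vecMulVec a (-b) = -vecMulVec a b := by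
  ext i j; simp [vecMulVec_apply]

lemma vmv_neg_left (a b : Fin n → ℝ) : vecMulVec (-a) b = -vecMulVec a b := by
  ext i j; simp [vecMulVec_apply]

lemma key (s lam : ℝ) (hlam : lam ≠ 0) (κ : Matrix (Fin n) (Fin n) ℝ)
    (hκ : κ.transpose = -κ) (γ p : Fin n → ℝ)
    (h1 : ∑ i, γ i * γ i = 1) (h2 : ∑ i, p i * γ i = 0) :
    laxLReal s lam κ γ p * laxAReal s lam κ γ
      - laxAReal s lam κ γ * laxLReal s lam κ γ p
    = vecMulVec p γ + vecMulVec γ p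
      + (lam * s / 2) • (κ * (vecMulVec γ p - vecMulVec p γ)
          - (vecMulVec γ p - vecMulVec p γ) * κ) := by
  have hvm : ∀ v : Fin n → ℝ, κ.vecMul v = -(κ.mulVec v) := by
    intro v
    rw [← Matrix.mulVec_transpose, hκ, Matrix.neg_mulVec]
  have h2' : ∑ i, γ i * p i = 0 := by
    rw [← h2]; exact Finset.sum_congr rfl (by intros; ring)
  have h3 : ∑ k, γ k * κ.mulVec γ k = 0 := by
    have h := congrArg (fun M => γ ⬝ᵥ M.mulVec γ) hκ
    simp only [Matrix.neg_mulVec, dotProduct_neg, Matrix.mulVec_transpose] at h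
    have h' : γ ⬝ᵥ κ.mulVec γ = 0 := by
      have hc : κ.vecMul γ ⬝ᵥ γ = γ ⬝ᵥ κ.vecMul γ := dotProduct_comm _ _
      rw [Matrix.dotProduct_mulVec] at *
      linarith [h, hc]
    simpa [dotProduct] using h'
  have h3' : ∑ k, κ.mulVec γ k * γ k = 0 := by
    rw [← h3]; exact Finset.sum_congr rfl (by intros; ring)
  simp only [laxLReal, laxAReal, magMomentum, mul_add, add_mul, mul_sub, sub_mul,
    smul_mul_assoc, Matrix.mul_smul, Matrix.smul_mul, smul_add, smul_sub, smul_smul,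
    pow_two, mul_assoc, mul_neg, neg_mul, Matrix.neg_mulVec, Matrix.mulVec_neg,
    Matrix.neg_vecMul, Matrix.vecMul_neg, Matrix.smul_mulVec, Matrix.mulVec_smul,
    Matrix.smul_vecMul, vecMul_smulM, ← Matrix.mulVec_mulVec, ← Matrix.vecMul_vecMul,
    mul_vmv, vmv_mul, vmv_vmv, vmv_mulVec, vecMul_vmv, vmv_smul_left, vmv_smul_right,
    hvm, smul_neg, neg_smul, vmv_neg_right, vmv_neg_left, h1, h2, h2', h3, h3']
  match_scalars <;> field_simp <;> ring

/-- along solutions of `γ' = p`, `p' = sκp + μγ` with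
`μ = s⟨p,κγ⟩ − ⟨p,p⟩`, on `⟨γ,γ⟩ = 1`, `⟨p,γ⟩ = 0`, the Lax equation
`𝓛(λ)' = [𝓛(λ), 𝓐(λ)]` holds for all `λ ≠ 0`. -/
theorem magnetic_lax_real
    (n : ℕ) (γ p : ℝ → Fin n → ℝ) (κ : Matrix (Fin n) (Fin n) ℝ)
    (hκ : κ.transpose = -κ) (s lam : ℝ) (hlam : lam ≠ 0) (μ : ℝ → ℝ)
    (hμ : ∀ t, μ t = s * (∑ i, p t i * κ.mulVec (γ t) i) - ∑ i, p t i * p t i)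
    (hγ : ∀ i t, HasDerivAt (fun τ => γ τ i) (p t i) t)
    (hp : ∀ i t, HasDerivAt (fun τ => p τ i)
      (s * κ.mulVec (p t) i + μ t * γ t i) t)
    (h1 : ∀ t, ∑ i, γ t i * γ t i = 1) (h2 : ∀ t, ∑ i, p t i * γ t i = 0) :
    ∀ i j t, HasDerivAt (fun τ => laxLReal s lam κ (γ τ) (p τ) i j)
      ((laxLReal s lam κ (γ t) (p t) * laxAReal s lam κ (γ t)
        - laxAReal s lam κ (γ t) * laxLReal s lam κ (γ t) (p t)) i j) t := by
  intro i j t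
  have hκe : ∀ a b, κ b a = -κ a b := by
    intro a b
    have := congrFun (congrFun hκ a) b
    simpa [Matrix.transpose_apply] using this
  rw [key s lam hlam κ hκ (γ t) (p t) (h1 t) (h2 t)]
  simp only [laxLReal, magMomentum, Matrix.add_apply, Matrix.sub_apply, Matrix.smul_apply,
    Matrix.mul_apply, vecMulVec_apply, smul_eq_mul, pow_two]
  have hGG : ∀ a b : Fin n, HasDerivAt (fun τ => γ τ a * γ τ b)
      (p t a * γ t b + γ t a * p t b) t := fun a b => (hγ a t).mul (hγ b t)
  have hA : HasDerivAt (fun τ => γ τ i * p τ j)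
      (p t i * p t j + γ t i * (s * κ.mulVec (p t) j + μ t * γ t j)) t :=
    (hγ i t).mul (hp j t)
  have hB : HasDerivAt (fun τ => p τ i * γ τ j)
      ((s * κ.mulVec (p t) i + μ t * γ t i) * γ t j + p t i * p t j) t :=
    (hp i t).mul (hγ j t)
  have hS1 : HasDerivAt (fun τ => ∑ x, κ i x * (γ τ x * γ τ j))
      (∑ x, κ i x * (p t x * γ t j + γ t x * p t j)) t :=
    HasDerivAt.fun_sum fun x _ => (hGG x j).const_mul (κ i x)
  have hS2 : HasDerivAt (fun τ => ∑ x, γ τ i * γ τ x * κ x j)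
      (∑ x, (p t i * γ t x + γ t i * p t x) * κ x j) t :=
    HasDerivAt.fun_sum fun x _ => by
      have := (hGG i x).mul_const (κ x j)
      simpa [mul_assoc] using this
  have hall := ((hasDerivAt_const t
      (lam * lam * (s * s) / 4 * ∑ x, κ i x * κ x j)).add
      (((hA.sub hB).add ((hS1.add hS2).const_mul (s / 2))).const_mul lam)).add (hGG i j)
  refine hall.congr_deriv ?_
  -- now a scalar identity
  have hsum1 : ∀ (v : Fin n → ℝ) (c : ℝ), ∑ x, κ i x * (v x * c) = κ.mulVec v i * c := by
    intro v c
    simp [Matrix.mulVec, dotProduct, Finset.sum_mul, mul_assoc]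
  have hsum2 : ∀ (v : Fin n → ℝ) (c : ℝ), ∑ x, c * v x * κ x j = -(c * κ.mulVec v j) := by
    intro v c
    rw [Matrix.mulVec, dotProduct, Finset.mul_sum, ← Finset.sum_neg_distrib]
    exact Finset.sum_congr rfl fun x _ => by rw [hκe j x]; ring
  simp only [mul_add, add_mul, mul_sub, sub_mul, Finset.sum_add_distrib,
    Finset.sum_sub_distrib, hsum1, hsum2]
  ring

end MagneticLaxAux
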